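/- For i ≠ j and h ∈ ℕ, the raising geometric product ⋄_{ji}^{(h)} on Λ(V)^{⊗m} equals the h-th divided power of the simple geometric product: ⋄_{ji}^{(h)} = (⋄_{ji})^h / h!. In particular (⋄_{ji})^h (A₁⊗⋯⊗Aₘ) is divisible by h! for all decomposable arguments. -/

import Mathlib

/-!
`D` is an even derivation that sends a letter of fold `i` to the same letter in fold `j` and
kills every other letter, so it squares to zero on letters. By the Leibniz rule and double
counting, `D^h` of a word of letters is `h!` times the sum, over `h`-sets `S` of positions, of
the word with the letters in `S` moved. In a pure tensor only the letters of `Aᵢ` move;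
sorting the word of fold `i` into the slice `(Sᶜ, S)` costs the shuffle sign of `S`, and carrying
the moved block past `A_{i+1}, …, A_{j-1}` costs `(-1)^{h(a_{i+1}+⋯+a_{j-1})}` by graded
commutativity. This is `h!` times the slice formula for `⋄_{ji}^{(h)}`; since pure tensors span,
the two linear maps agree everywhere.
-/

/-- The shuffle sign of the coproduct slice `(Sᶜ, S)` of a word of length `a`. -/
def shuffleSign {a : ℕ} (S : Finset (Fin a)) : ℤ :=
  (-1) ^ (∑ i ∈ S, (Sᶜ.filter fun j => i < j).card)

/-- The `m`-th `ℤ₂`-graded tensor power `Λ(V)^{⊗m}`, in its letterplace encoding as the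
exterior algebra of `V^m`. -/
abbrev TensorPowerExt (K V : Type*) [Field K] [AddCommGroup V] [Module K V] (m : ℕ) : Type _ :=
  ExteriorAlgebra K (Fin m → V)

/-- The element `1 ⊗ ⋯ ⊗ v ⊗ ⋯ ⊗ 1` with `v ∈ V` in fold `i`. -/
noncomputable def slotVar {K V : Type*} [Field K] [AddCommGroup V] [Module K V] {m : ℕ}
    (i : Fin m) (v : V) : TensorPowerExt K V m :=
  ExteriorAlgebra.ι K (Pi.single i v)

/-- The extensor `1 ⊗ ⋯ ⊗ (w₀ ∧ ⋯ ∧ w_{c-1}) ⊗ ⋯ ⊗ 1` lying in fold `s`. -/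
noncomputable def slotExt {K V : Type*} [Field K] [AddCommGroup V] [Module K V] {m : ℕ}
    (s : Fin m) {c : ℕ} (w : Fin c → V) : TensorPowerExt K V m :=
  ExteriorAlgebra.ιMulti K c fun t => Pi.single s (w t)

/-- The ordered wedge, in fold `s`, of the vectors `w t`, `t ∈ S`. -/
noncomputable def slotWedgeOn {K V : Type*} [Field K] [AddCommGroup V] [Module K V] {m : ℕ}
    (s : Fin m) {c : ℕ} (w : Fin c → V) (S : Finset (Fin c)) : TensorPowerExt K V m :=
  ((S.sort (· ≤ ·)).map fun t => ExteriorAlgebra.ι K (Pi.single s (w t))).prod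

/-- The decomposable tensor `A₁ ⊗ ⋯ ⊗ Aₘ`, where `Aₛ` is the extensor of the family `u s`. -/
noncomputable def pureTensor {K V : Type*} [Field K] [AddCommGroup V] [Module K V] {m : ℕ}
    (a : Fin m → ℕ) (u : (s : Fin m) → Fin (a s) → V) : TensorPowerExt K V m :=
  (List.ofFn fun s => slotExt s (u s)).prod

namespace List

theorem ofFn_update {α : Type*} {c : ℕ} (f : Fin c → α) (k : Fin c) (x : α) :
    ofFn (Function.update f k x) = (ofFn f).set k x := by
  refine ext_getElem (by simp) fun _ _ _ => ?_
  simp [getElem_set, Function.update_apply, Fin.ext_iff, eq_comm]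

section Monoid

variable {A : Type*} [Monoid A] {c : ℕ}

theorem prod_ofFn_update (f : Fin c → A) (k : Fin c) (x : A) :
    (ofFn (Function.update f k x)).prod =
      ((ofFn f).take k).prod * x * ((ofFn f).drop (k + 1)).prod := by
  rw [ofFn_update, prod_set, if_pos (by simp)]

theorem prod_ofFn_update_mul_eq_update_mul (f : Fin c → A) {k l : Fin c}
    (hkl : (l : ℕ) = k + 1) (y : A) :
    (ofFn (Function.update f k (f k * y))).prod = (ofFn (Function.update f l (y * f l))).prod := by
  rw [prod_ofFn_update, prod_ofFn_update, hkl, prod_take_succ _ _ (by simp),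
    drop_eq_getElem_cons (by simp; omega), prod_cons]
  simp only [List.getElem_ofFn, ← hkl, mul_assoc]

theorem prod_ofFn_update_smul {S : Type*} [Monoid S] [MulAction S A] [IsScalarTower S A A]
    [SMulCommClass S A A] (f : Fin c → A) (k : Fin c) (z : S) (x : A) :
    (ofFn (Function.update f k (z • x))).prod = z • (ofFn (Function.update f k x)).prod := by
  rw [prod_ofFn_update, prod_ofFn_update, mul_smul_comm, smul_mul_assoc]

end Monoid

theorem prod_ofFn_update_zero {A : Type*} [MonoidWithZero A] {c : ℕ} (f : Fin c → A)
    (k : Fin c) : (ofFn (Function.update f k 0)).prod = 0 :=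
  prod_eq_zero (mem_ofFn.mpr ⟨k, by simp⟩)

theorem prod_ofFn_update_sum {A ι : Type*} [Semiring A] {c : ℕ} (f : Fin c → A) (k : Fin c)
    (s : Finset ι) (g : ι → A) :
    (ofFn (Function.update f k (∑ b ∈ s, g b))).prod =
      ∑ b ∈ s, (ofFn (Function.update f k (g b))).prod := by
  simp only [prod_ofFn_update, Finset.mul_sum, Finset.sum_mul]

end List

theorem Finset.sum_powersetCard_sum_compl_insert {α β : Type*} [Fintype α] [DecidableEq α]
    [AddCommMonoid β] (n : ℕ) (f : Finset α → β) :
    ∑ S ∈ powersetCard n univ, ∑ t ∈ Sᶜ, f (insert t S)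
      = (n + 1) • ∑ T ∈ powersetCard (n + 1) univ, f T := by
  have hcard : ∀ T ∈ powersetCard (n + 1) (univ : Finset α), ∑ _t ∈ T, f T = (n + 1) • f T :=
    fun T hT => by rw [sum_const, mem_powersetCard_univ.mp hT]
  rw [smul_sum, ← sum_congr rfl hcard, sum_sigma', sum_sigma']
  refine sum_nbij' (fun x => ⟨insert x.2 x.1, x.2⟩) (fun y => ⟨y.1.erase y.2, y.2⟩)
    ?_ ?_ ?_ ?_ (fun _ _ => rfl) <;> rintro ⟨S, t⟩ h <;>
    simp only [mem_sigma, mem_powersetCard_univ, mem_compl] at h ⊢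
  · simp [card_insert_of_notMem h.2, h.1]
  · simp [card_erase_of_mem h.2, h.1]
  · simp [erase_insert h.2]
  · simp [insert_erase h.2]

section Leibniz

variable {R A : Type*} [CommSemiring R] [Ring A] [Module R A] (D : Module.End R A)
  (hD : ∀ x y, D (x * y) = D x * y + x * D y)
include hD

theorem map_one_eq_zero_of_leibniz : D 1 = 0 := by
  simpa using hD 1 1

theorem map_prod_ofFn_of_leibniz {c : ℕ} (f : Fin c → A) :
    D (List.ofFn f).prod = ∑ k, (List.ofFn (Function.update f k (D (f k)))).prod := by
  induction c with
  | zero => simp [map_one_eq_zero_of_leibniz D hD]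
  | succ c ih =>
    rw [List.ofFn_succ, List.prod_cons, hD, ih, Fin.sum_univ_succ, Finset.mul_sum]
    congr 1
    · simp [List.ofFn_succ]
    · refine Finset.sum_congr rfl fun k _ => ?_
      rw [List.ofFn_succ, List.prod_cons, Function.update_of_ne (Fin.succ_ne_zero k).symm,
        ← Function.update_comp_eq_of_injective' f (Fin.succ_injective _)]

theorem map_prod_ofFn_eq_zero_of_leibniz {c : ℕ} (f : Fin c → A) (hf : ∀ k, D (f k) = 0) :
    D (List.ofFn f).prod = 0 := by
  rw [map_prod_ofFn_of_leibniz D hD]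
  exact Finset.sum_eq_zero fun k _ => by rw [hf, List.prod_ofFn_update_zero]

theorem pow_apply_prod_ofFn_of_leibniz_of_forall_ne {c : ℕ} (f : Fin c → A) (k : Fin c)
    (hf : ∀ l ≠ k, D (f l) = 0) (n : ℕ) :
    (D ^ n) (List.ofFn f).prod = (List.ofFn (Function.update f k ((D ^ n) (f k)))).prod := by
  induction n with
  | zero => simp
  | succ n ih =>
    have hupd : ∀ l ≠ k, D (Function.update f k ((D ^ n) (f k)) l) = 0 := fun l hl => by
      rw [Function.update_of_ne hl, hf l hl]
    rw [pow_succ', Module.End.mul_apply, ih, map_prod_ofFn_of_leibniz D hD,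
      Finset.sum_eq_single k (fun l _ hl => by rw [hupd l hl, List.prod_ofFn_update_zero])
        (by simp),
      Function.update_idem, Function.update_self, Module.End.mul_apply]

theorem pow_apply_prod_ofFn_of_leibniz_of_map_map_eq_zero {c : ℕ} (f : Fin c → A)
    (hf : ∀ k, D (D (f k)) = 0) (n : ℕ) :
    (D ^ n) (List.ofFn f).prod = n.factorial • ∑ S ∈ Finset.powersetCard n Finset.univ,
      (List.ofFn fun k => if k ∈ S then D (f k) else f k).prod := by
  set word : Finset (Fin c) → A := fun S =>
    (List.ofFn fun k => if k ∈ S then D (f k) else f k).prod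
  have hstep : ∀ S, D (word S) = ∑ t ∈ Sᶜ, word (insert t S) := by
    intro S
    rw [map_prod_ofFn_of_leibniz D hD, ← Finset.sum_add_sum_compl S,
      Finset.sum_eq_zero fun k hk => by rw [if_pos hk, hf, List.prod_ofFn_update_zero], zero_add]
    refine Finset.sum_congr rfl fun t ht => congrArg _ (congrArg _ (funext fun k => ?_))
    rw [Finset.mem_compl] at ht
    by_cases hk : k = t
    · simp [hk, ht]
    · simp [hk]
  induction n with
  | zero => simp [word]
  | succ n ih =>
    rw [pow_succ', Module.End.mul_apply, ih, map_nsmul, map_sum,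
      Finset.sum_congr rfl fun S _ => hstep S, Finset.sum_powersetCard_sum_compl_insert,
      smul_smul, Nat.factorial_succ, mul_comm]

end Leibniz

theorem shuffleSign_insert_of_forall_lt {c : ℕ} {t : Fin c} {S : Finset (Fin c)}
    (h : ∀ x ∈ S, t < x) (ht : t ∉ S) :
    shuffleSign (insert t S) =
      (-1) ^ ((insert t S)ᶜ.filter fun y => t < y).card * shuffleSign S := by
  rw [shuffleSign, shuffleSign, Finset.sum_insert ht, pow_add]
  congr 2
  refine Finset.sum_congr rfl fun x hx => congrArg Finset.card ?_
  ext y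
  simp only [Finset.mem_filter, Finset.mem_compl, Finset.mem_insert, not_or]
  exact ⟨fun hy => ⟨hy.1.2, hy.2⟩,
    fun hy => ⟨⟨fun hyt => (h x hx).not_gt (hyt ▸ hy.2), hy.1⟩, hy.2⟩⟩

namespace ExteriorAlgebra

variable {R M : Type*} [CommRing R] [AddCommGroup M] [Module R M]

theorem mul_comm_of_mem_exteriorPower {p q : ℕ} {x y : ExteriorAlgebra R M}
    (hx : x ∈ ⋀[R]^p M) (hy : y ∈ ⋀[R]^q M) : x * y = ((-1 : ℤ) ^ (p * q)) • (y * x) := by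
  -- The exterior algebra is the Clifford algebra of the zero form, graded over `ZMod 2`.
  have hmem : ∀ {z : ExteriorAlgebra R M} {n : ℕ}, z ∈ ⋀[R]^n M →
      z ∈ CliffordAlgebra.evenOdd (0 : QuadraticForm R M) (n : ZMod 2) := fun hz =>
    Submodule.mem_iSup_of_mem (ι := {k : ℕ // (k : ZMod 2) = _}) ⟨_, rfl⟩ hz
  have := CliffordAlgebra.map_mul_map_of_isOrtho_of_mem_evenOdd (QuadraticMap.Isometry.id _)
    (QuadraticMap.Isometry.id _) (fun _ _ => by simp [QuadraticMap.IsOrtho]) x y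
    (hmem hx) (hmem hy)
  simp only [CliffordAlgebra.map_id, AlgHom.id_apply] at this
  rw [this, ← Nat.cast_mul, mul_comm q, uzpow_natCast, Units.smul_def]
  push_cast
  rfl

theorem ι_mem_exteriorPower_one (x : M) : ι R x ∈ ⋀[R]^1 M := by
  rw [exteriorPower, pow_one]
  exact LinearMap.mem_range_self _ x

theorem list_prod_map_ι_mem_exteriorPower (l : List M) :
    (l.map (ι R)).prod ∈ ⋀[R]^l.length M := by
  induction l with
  | nil => simp [Submodule.one_eq_span]
  | cons x l ih =>
    rw [List.map_cons, List.prod_cons, List.length_cons, exteriorPower, pow_succ']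
    exact Submodule.mul_mem_mul (LinearMap.mem_range_self _ x) ih

variable (R) in
noncomputable def wedgeOn {α : Type*} [LinearOrder α] (g : α → M) (T : Finset α) :
    ExteriorAlgebra R M :=
  ((T.sort (· ≤ ·)).map fun t => ι R (g t)).prod

section wedgeOn

variable {α : Type*} [LinearOrder α] (g : α → M)

theorem wedgeOn_congr {g' : α → M} {T : Finset α} (h : ∀ t ∈ T, g t = g' t) :
    wedgeOn R g T = wedgeOn R g' T :=
  congrArg List.prod (List.map_congr_left fun t ht => by rw [h t (by simpa using ht)])

theorem wedgeOn_mem_exteriorPower (T : Finset α) : wedgeOn R g T ∈ ⋀[R]^T.card M := by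
  simpa [wedgeOn, List.map_map, Function.comp_def] using
    list_prod_map_ι_mem_exteriorPower (R := R) ((T.sort (· ≤ ·)).map g)

theorem wedgeOn_insert_of_forall_lt {t : α} {T : Finset α} (h : ∀ x ∈ T, t < x) (ht : t ∉ T) :
    wedgeOn R g (insert t T) = ι R (g t) * wedgeOn R g T := by
  rw [wedgeOn, Finset.sort_insert _ (fun x hx => (h x hx).le) ht, List.map_cons, List.prod_cons,
    wedgeOn]

theorem wedgeOn_insert {t : α} {T : Finset α} (ht : t ∉ T) :
    wedgeOn R g (insert t T) =
      ((-1 : ℤ) ^ (T.filter fun x => t < x).card) • (wedgeOn R g T * ι R (g t)) := by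
  induction T using Finset.induction_on_min with
  | empty => simp [wedgeOn]
  | insert u U hu ih =>
    rcases lt_or_gt_of_ne (show t ≠ u by rintro rfl; simp at ht) with htu | hut
    · have hlt : ∀ x ∈ insert u U, t < x := by
        simpa [htu] using fun x hx => htu.trans (hu x hx)
      rw [wedgeOn_insert_of_forall_lt g hlt ht, Finset.filter_true_of_mem hlt,
        mul_comm_of_mem_exteriorPower (ι_mem_exteriorPower_one _) (wedgeOn_mem_exteriorPower g _),
        one_mul]
    · have huU : u ∉ U := fun h => lt_irrefl u (hu u h)
      rw [Finset.insert_comm, wedgeOn_insert_of_forall_lt g _ (by simp [huU, hut.ne]),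
        ih (by simp_all), wedgeOn_insert_of_forall_lt g hu huU, mul_smul_comm, ← mul_assoc,
        Finset.filter_insert, if_neg (not_lt.mpr hut.le)]
      simpa [hut] using fun x hx => hu x hx

end wedgeOn

theorem prod_ofFn_ι_eq_shuffleSign_smul {c : ℕ} (g : Fin c → M) (S : Finset (Fin c)) :
    (List.ofFn fun k => ι R (g k)).prod = shuffleSign S • (wedgeOn R g Sᶜ * wedgeOn R g S) := by
  induction S using Finset.induction_on_min with
  | empty => simp [wedgeOn, shuffleSign, List.ofFn_eq_map, Fin.sort_univ]
  | insert t S ht ih =>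
    have htS : t ∉ S := fun h => lt_irrefl t (ht t h)
    rw [ih, shuffleSign_insert_of_forall_lt ht htS,
      ← Finset.insert_erase (Finset.mem_compl.mpr htS), wedgeOn_insert g (Finset.notMem_erase t _),
      smul_mul_assoc, mul_assoc, ← wedgeOn_insert_of_forall_lt g ht htS, smul_smul,
      Finset.compl_insert, mul_comm]

section Reorder

variable {c : ℕ} (f : Fin c → ExteriorAlgebra R M) (n : Fin c → ℕ) {p : ℕ}
  {y : ExteriorAlgebra R M}

theorem prod_ofFn_update_mul_left_of_le {k l : Fin c} (hkl : k ≤ l)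
    (hf : ∀ t ∈ Finset.Ico k l, f t ∈ ⋀[R]^(n t) M) (hy : y ∈ ⋀[R]^p M) :
    (List.ofFn (Function.update f k (y * f k))).prod =
      ((-1 : ℤ) ^ (p * ∑ t ∈ Finset.Ico k l, n t)) •
        (List.ofFn (Function.update f l (y * f l))).prod := by
  obtain ⟨d, hd⟩ := Nat.exists_eq_add_of_le (Fin.le_def.mp hkl)
  induction d generalizing l with
  | zero => simp [Fin.ext hd]
  | succ d ih =>
    set l' : Fin c := ⟨k + d, by omega⟩
    have hIco : Finset.Ico k l = insert l' (Finset.Ico k l') := by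
      ext t
      simp only [Finset.mem_Ico, Finset.mem_insert, Fin.ext_iff, Fin.le_iff_val_le_val,
        Fin.lt_def, l']
      omega
    rw [hIco] at hf
    rw [ih (l := l') (Fin.le_iff_val_le_val.mpr (by simp [l']))
        (fun t ht => hf t (Finset.mem_insert_of_mem ht)) rfl,
      mul_comm_of_mem_exteriorPower hy (hf l' (Finset.mem_insert_self _ _)),
      List.prod_ofFn_update_smul,
      List.prod_ofFn_update_mul_eq_update_mul f (l := l) (by simp only [l', hd]; omega),
      smul_smul, hIco, Finset.sum_insert (by simp), ← pow_add, mul_add, add_comm (p * n l')]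

theorem mul_prod_ofFn (l : Fin c) (hf : ∀ t < l, f t ∈ ⋀[R]^(n t) M) (hy : y ∈ ⋀[R]^p M) :
    y * (List.ofFn f).prod =
      ((-1 : ℤ) ^ (p * ∑ t ∈ Finset.Iio l, n t)) •
        (List.ofFn (Function.update f l (y * f l))).prod := by
  set k : Fin c := ⟨0, l.pos⟩
  have hIco : Finset.Ico k l = Finset.Iio l := by
    ext t
    simp [k, Fin.le_iff_val_le_val]
  rw [← hIco, ← prod_ofFn_update_mul_left_of_le f n (Fin.le_iff_val_le_val.mpr (Nat.zero_le _))
    (fun t ht => hf t (Finset.mem_Iio.mp (hIco ▸ ht))) hy, List.prod_ofFn_update]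
  obtain _ | c := c
  · exact l.elim0
  · simp [k, List.ofFn_succ, mul_assoc]

theorem prod_ofFn_update_mul_right {i j : Fin c} (hij : i < j)
    (hf : ∀ t ∈ Finset.Ioo i j, f t ∈ ⋀[R]^(n t) M) (hy : y ∈ ⋀[R]^p M) :
    (List.ofFn (Function.update f i (f i * y))).prod =
      ((-1 : ℤ) ^ (p * ∑ t ∈ Finset.Ioo i j, n t)) •
        (List.ofFn (Function.update f j (y * f j))).prod := by
  set i' : Fin c := ⟨i + 1, by omega⟩
  have hIco : Finset.Ico i' j = Finset.Ioo i j := by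
    ext t
    simp only [Finset.mem_Ico, Finset.mem_Ioo, Fin.le_iff_val_le_val, Fin.lt_def, i']
    omega
  rw [List.prod_ofFn_update_mul_eq_update_mul f (l := i') rfl, ← hIco]
  exact prod_ofFn_update_mul_left_of_le f n
    (Fin.le_iff_val_le_val.mpr (show (i' : ℕ) ≤ j from hij)) (hIco ▸ hf) hy

end Reorder

end ExteriorAlgebra

section TensorPower

open ExteriorAlgebra

variable {K V : Type*} [Field K] [AddCommGroup V] [Module K V] {m : ℕ}

theorem slotWedgeOn_eq_wedgeOn (s : Fin m) {c : ℕ} (w : Fin c → V) (T : Finset (Fin c)) :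
    slotWedgeOn (K := K) s w T = wedgeOn K (fun t => Pi.single s (w t)) T := rfl

theorem slotExt_mem_exteriorPower (s : Fin m) {c : ℕ} (w : Fin c → V) :
    slotExt (K := K) s w ∈ ⋀[K]^c (Fin m → V) :=
  ιMulti_range K c ⟨_, rfl⟩

theorem slotVar_mul_slotExt (s : Fin m) (v : V) {c : ℕ} (w : Fin c → V) :
    slotVar (K := K) s v * slotExt s w = slotExt s (Fin.cons v w) := by
  rw [slotExt, slotExt, ιMulti_succ_apply]
  simp [slotVar, Matrix.vecTail, Function.comp_def]

theorem exists_pureTensor_eq_prod_ofFn {x : Fin m → TensorPowerExt K V m}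
    (hx : ∀ s, ∃ c, ∃ w : Fin c → V, slotExt s w = x s) :
    ∃ a u, pureTensor a u = (List.ofFn x).prod := by
  choose a u hu using hx
  exact ⟨a, u, by simp only [pureTensor, hu]⟩

theorem slotVar_mul_pureTensor_mem_span (s : Fin m) (v : V) (a : Fin m → ℕ)
    (u : (s : Fin m) → Fin (a s) → V) :
    slotVar s v * pureTensor a u ∈ Submodule.span K {x | ∃ a u, pureTensor (K := K) a u = x} := by
  rw [pureTensor, slotVar, mul_prod_ofFn _ a s (fun t _ => slotExt_mem_exteriorPower t (u t))
    (ι_mem_exteriorPower_one _)]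
  refine Submodule.smul_of_tower_mem _ _
    (Submodule.subset_span (exists_pureTensor_eq_prod_ofFn fun t => ?_))
  by_cases hts : t = s
  · subst hts
    exact ⟨_, Fin.cons v (u t), by rw [Function.update_self, ← slotVar_mul_slotExt]; rfl⟩
  · exact ⟨_, u t, by rw [Function.update_of_ne hts]⟩

theorem span_pureTensor_eq_top :
    Submodule.span K {x | ∃ a u, pureTensor (K := K) (V := V) (m := m) a u = x} = ⊤ := by
  set P := Submodule.span K {x | ∃ a u, pureTensor (K := K) (V := V) (m := m) a u = x}
  have hmul : ∀ s v, P ≤ P.comap (LinearMap.mulLeft K (slotVar s v)) := fun s v =>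
    Submodule.span_le.mpr fun _ ⟨a, u, hx⟩ => hx ▸ slotVar_mul_pureTensor_mem_span s v a u
  rw [eq_top_iff, ← ιMulti_span, Submodule.span_le]
  rintro _ ⟨⟨n, w⟩, rfl⟩
  dsimp only
  induction n with
  | zero =>
    obtain ⟨a, u, h⟩ := exists_pureTensor_eq_prod_ofFn (x := fun _ => (1 : TensorPowerExt K V m))
      fun s => ⟨0, Fin.elim0, ιMulti_zero_apply _⟩
    exact Submodule.subset_span ⟨a, u, by simpa [ιMulti_zero_apply] using h⟩
  | succ n ih =>
    rw [ιMulti_succ_apply, ← Finset.univ_sum_single (w 0), map_sum, Finset.sum_mul]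
    exact Submodule.sum_mem _ fun s _ => hmul s _ (ih _)

/-- The summand `⋯ ⊗ (Aᵢ)₍₁₎ ⊗ ⋯ ⊗ (Aᵢ)₍₂₎Aⱼ ⊗ ⋯` of `⋄_{ji}^{(h)}(A₁ ⊗ ⋯ ⊗ Aₘ)` for the
slice `(Sᶜ, S)` of `Aᵢ`. -/
noncomputable def sliceTensor (i j : Fin m) (a : Fin m → ℕ) (u : (s : Fin m) → Fin (a s) → V)
    (S : Finset (Fin (a i))) : TensorPowerExt K V m :=
  (List.ofFn fun s : Fin m =>
    if s = i then slotWedgeOn i (u i) Sᶜ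
    else if s = j then slotWedgeOn j (u i) S * slotExt j (u j)
    else slotExt s (u s)).prod

theorem prod_ofFn_update_slotWedgeOn_mul {i j : Fin m} (hij : i < j) (a : Fin m → ℕ)
    (u : (s : Fin m) → Fin (a s) → V) (S : Finset (Fin (a i))) :
    (List.ofFn (Function.update (fun s => slotExt s (u s)) i
        (slotWedgeOn i (u i) Sᶜ * slotWedgeOn j (u i) S))).prod =
      ((-1 : ℤ) ^ (S.card * ∑ s ∈ Finset.Ioo i j, a s)) • sliceTensor (K := K) i j a u S := by
  have hmove := prod_ofFn_update_mul_right
    (Function.update (fun s => slotExt (K := K) s (u s)) i (slotWedgeOn i (u i) Sᶜ)) a hij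
    (fun t ht => by
      rw [Function.update_of_ne (Finset.mem_Ioo.mp ht).1.ne']
      exact slotExt_mem_exteriorPower t (u t))
    (wedgeOn_mem_exteriorPower (R := K) (fun t => Pi.single j (u i t)) S)
  rw [Function.update_idem, Function.update_self, ← slotWedgeOn_eq_wedgeOn] at hmove
  rw [hmove, sliceTensor]
  refine congrArg _ (congrArg _ (congrArg _ (funext fun s => ?_)))
  by_cases hsj : s = j
  · subst hsj
    simp [hij.ne']
  · by_cases hsi : s = i
    · subst hsi
      simp [hsj]
    · simp [hsi, hsj]

section RaisingOperator

variable (D : Module.End K (TensorPowerExt K V m))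
  (hD : ∀ x y, D (x * y) = D x * y + x * D y) {i j : Fin m}
  (hgen : ∀ (s : Fin m) (v : V), D (slotVar s v) = if s = i then slotVar j v else 0)
include hD hgen

theorem map_slotExt_of_ne {s : Fin m} (hs : s ≠ i) {c : ℕ} (w : Fin c → V) :
    D (slotExt s w) = 0 := by
  rw [slotExt, ιMulti_apply]
  exact map_prod_ofFn_eq_zero_of_leibniz D hD _ fun k => (hgen s (w k)).trans (if_neg hs)

theorem pow_apply_slotExt (hij : i ≠ j) {c : ℕ} (w : Fin c → V) (n : ℕ) :
    (D ^ n) (slotExt i w) = n.factorial • ∑ S ∈ Finset.powersetCard n Finset.univ,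
      shuffleSign S • (slotWedgeOn i w Sᶜ * slotWedgeOn j w S) := by
  have hDi : ∀ v, D (ι K (Pi.single i v)) = ι K (Pi.single j v) := fun v =>
    (hgen i v).trans (if_pos rfl)
  have hDj : ∀ v, D (ι K (Pi.single j v)) = 0 := fun v => (hgen j v).trans (if_neg hij.symm)
  rw [slotExt, ιMulti_apply, pow_apply_prod_ofFn_of_leibniz_of_map_map_eq_zero D hD _
    fun k => by rw [hDi, hDj]]
  refine congrArg _ (Finset.sum_congr rfl fun S _ => ?_)
  set g : Fin c → Fin m → V := fun k => if k ∈ S then Pi.single j (w k) else Pi.single i (w k)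
  have hword : (List.ofFn fun k => if k ∈ S then D (ι K (Pi.single i (w k)))
      else ι K (Pi.single i (w k))) = List.ofFn fun k => ι K (g k) := by
    congr 1
    funext k
    by_cases hk : k ∈ S <;> simp [g, hk, hDi]
  rw [hword, prod_ofFn_ι_eq_shuffleSign_smul g S, slotWedgeOn_eq_wedgeOn, slotWedgeOn_eq_wedgeOn,
    wedgeOn_congr g (g' := fun k => Pi.single i (w k))
      fun k hk => by simp [g, Finset.mem_compl.mp hk],
    wedgeOn_congr g (g' := fun k => Pi.single j (w k)) (T := S) fun k hk => by simp [g, hk]]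

theorem pow_apply_pureTensor (hij : i < j) (a : Fin m → ℕ) (u : (s : Fin m) → Fin (a s) → V)
    (n : ℕ) :
    (D ^ n) (pureTensor a u) = n.factorial • ((-1 : ℤ) ^ (n * ∑ s ∈ Finset.Ioo i j, a s)) •
      ∑ S ∈ Finset.powersetCard n Finset.univ, shuffleSign S • sliceTensor i j a u S := by
  rw [pureTensor, pow_apply_prod_ofFn_of_leibniz_of_forall_ne D hD _ i
    (fun s hs => map_slotExt_of_ne D hD hgen hs _), pow_apply_slotExt D hD hgen hij.ne,
    List.prod_ofFn_update_smul, List.prod_ofFn_update_sum]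
  congr 1
  rw [Finset.smul_sum]
  refine Finset.sum_congr rfl fun S hS => ?_
  rw [List.prod_ofFn_update_smul, prod_ofFn_update_slotWedgeOn_mul hij,
    Finset.mem_powersetCard_univ.mp hS, smul_comm]

end RaisingOperator

end TensorPower

theorem stmt13_general {K V : Type*} [Field K] [AddCommGroup V] [Module K V]
    {m : ℕ} (i j : Fin m) (hij : i < j) (h : ℕ)
    (D : Module.End K (TensorPowerExt K V m))
    (hLeibniz : ∀ x y : TensorPowerExt K V m, D (x * y) = D x * y + x * D y)
    (hgen : ∀ (s : Fin m) (v : V), D (slotVar s v) = if s = i then slotVar j v else 0)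
    (Dh : Module.End K (TensorPowerExt K V m))
    (hDh : ∀ (a : Fin m → ℕ) (u : (s : Fin m) → Fin (a s) → V),
      Dh (pureTensor a u) =
        ((-1 : ℤ) ^ (h * ∑ s ∈ Finset.Ioo i j, a s)) •
          ∑ S ∈ Finset.powersetCard h (Finset.univ : Finset (Fin (a i))),
            shuffleSign S •
              (List.ofFn fun s : Fin m =>
                if s = i then slotWedgeOn i (u i) Sᶜ
                else if s = j then slotWedgeOn j (u i) S * slotExt j (u j)
                else slotExt s (u s)).prod) :
    D ^ h = (h.factorial : K) • Dh ∧
      ∀ (a : Fin m → ℕ) (u : (s : Fin m) → Fin (a s) → V),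
        ∃ y, (D ^ h) (pureTensor a u) = (h.factorial : K) • y := by
  have hpure : ∀ a u, (D ^ h) (pureTensor a u) = (h.factorial : K) • Dh (pureTensor a u) :=
    fun a u => by
      rw [pow_apply_pureTensor D hLeibniz hgen hij, hDh, Nat.cast_smul_eq_nsmul]
      rfl
  refine ⟨LinearMap.ext_on span_pureTensor_eq_top ?_, fun a u => ⟨_, hpure a u⟩⟩
  rintro _ ⟨a, u, rfl⟩
  exact hpure a u

/-- in characteristic zero, the raising geometric product `⋄_{ji}^{(h)}`
(`i < j`), characterized on decomposable tensors by the slice formula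
`⋄_{ji}^{(h)}(A₁⊗⋯⊗Aₘ) = (-1)^{h(a_{i+1}+⋯+a_{j-1})} Σ_{(Aᵢ)₍ₐᵢ₋ₕ,ₕ₎} ⋯⊗(Aᵢ)₍₁₎⊗⋯⊗(Aᵢ)₍₂₎Aⱼ⊗⋯`,
equals the `h`-th divided power `(⋄_{ji})^h / h!` of the simple geometric product `⋄_{ji}`;
in particular `(⋄_{ji})^h (A₁⊗⋯⊗Aₘ)` is divisible by `h!`. -/
theorem stmt13 {K V : Type*} [Field K] [CharZero K] [AddCommGroup V] [Module K V]
    [FiniteDimensional K V] {m : ℕ} (i j : Fin m) (hij : i < j) (h : ℕ)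
    (D : Module.End K (TensorPowerExt K V m))
    (hLeibniz : ∀ x y : TensorPowerExt K V m, D (x * y) = D x * y + x * D y)
    (hgen : ∀ (s : Fin m) (v : V), D (slotVar s v) = if s = i then slotVar j v else 0)
    (Dh : Module.End K (TensorPowerExt K V m))
    (hDh : ∀ (a : Fin m → ℕ) (u : (s : Fin m) → Fin (a s) → V),
      Dh (pureTensor a u) =
        ((-1 : ℤ) ^ (h * ∑ s ∈ Finset.Ioo i j, a s)) •
          ∑ S ∈ Finset.powersetCard h (Finset.univ : Finset (Fin (a i))),
            shuffleSign S •
              (List.ofFn fun s : Fin m =>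
                if s = i then slotWedgeOn i (u i) Sᶜ
                else if s = j then slotWedgeOn j (u i) S * slotExt j (u j)
                else slotExt s (u s)).prod) :
    D ^ h = (h.factorial : K) • Dh ∧
      ∀ (a : Fin m → ℕ) (u : (s : Fin m) → Fin (a s) → V),
        ∃ y, (D ^ h) (pureTensor a u) = (h.factorial : K) • y :=
  stmt13_general i j hij h D hLeibniz hgen Dh hDh
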